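/- arXiv:2403.11544 — 5 statements merged into one kernel-verified Lean document; each statement's English description precedes it below -/
import Mathlib

section
/- Let $\sigma_\eta: \mathbb{R}^A \to \Delta^{A-1}$ be the softmax map $\sigma_\eta(z)_a = \exp(\eta z_a)/\sum_{a'}\exp(\eta z_{a'})$ with parameter $\eta > 0$. Then for all $z, z' \in \mathbb{R}^A$, $\|\sigma_\eta(z) - \sigma_\eta(z')\|_1 \leq \eta \|z - z'\|_\infty$. -/
open BigOperators

noncomputable def softmax {A : ℕ} (η : ℝ) (z : Fin A → ℝ) (a : Fin A) : ℝ :=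
  Real.exp (η * z a) / ∑ a', Real.exp (η * z a')

/-!
Along the segment `t ↦ z' + t • v`, `v = z - z'`, the softmax vector `p` moves with velocity
`η p_a (v_a - ∑ p_b v_b)`. For a fixed sign vector `ε` the speed of `∑ ε_a p_a` is therefore at most
`η` times the mean absolute deviation of `v` under `p`, which by Cauchy–Schwarz is at most the
standard deviation, hence at most `‖v‖∞`. Choosing `ε_a` as the sign of the `a`-th difference, the
mean value theorem bounds the `ℓ1` distance.
-/

open Finset

theorem sum_mul_abs_sub_sum_mul_le {ι : Type*} [Fintype ι] {p δ : ι → ℝ} {c : ℝ}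
    (hp : ∀ a, 0 ≤ p a) (hp1 : ∑ a, p a = 1) (hδ : ∀ a, |δ a| ≤ c) :
    ∑ a, p a * |δ a - ∑ b, p b * δ b| ≤ c := by
  set m := ∑ b, p b * δ b
  obtain ⟨a₀, -, -⟩ := exists_ne_zero_of_sum_ne_zero (hp1.trans_ne one_ne_zero)
  have hc : 0 ≤ c := (abs_nonneg _).trans (hδ a₀)
  have cauchy_schwarz : (∑ a, p a * |δ a - m|) ^ 2 ≤ ∑ a, p a * (δ a - m) ^ 2 := by
    simpa [hp1] using sum_sq_le_sum_mul_sum_of_sq_le_mul univ (fun a _ => hp a)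
      (fun a _ => mul_nonneg (hp a) (sq_nonneg (δ a - m)))
      (fun a _ => (by rw [mul_pow, sq_abs]; ring :
        (p a * |δ a - m|) ^ 2 = p a * (p a * (δ a - m) ^ 2)).le)
  have variance : ∑ a, p a * (δ a - m) ^ 2 = ∑ a, p a * δ a ^ 2 - m ^ 2 := by
    have expand : ∀ a, p a * (δ a - m) ^ 2 = p a * δ a ^ 2 - 2 * m * (p a * δ a) + m ^ 2 * p a :=
      fun a => by ring
    simp only [expand, sum_add_distrib, sum_sub_distrib, ← mul_sum, hp1]
    ring
  have second_moment : ∑ a, p a * δ a ^ 2 ≤ c ^ 2 := calc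
    ∑ a, p a * δ a ^ 2 ≤ ∑ a, p a * c ^ 2 :=
      sum_le_sum fun a _ => mul_le_mul_of_nonneg_left (sq_le_sq.2 ((hδ a).trans (le_abs_self c)))
        (hp a)
    _ = c ^ 2 := by rw [← sum_mul, hp1, one_mul]
  exact (abs_le_of_sq_le_sq' (by linarith [sq_nonneg m]) hc).2

theorem sum_exp_pos {ι : Type*} [Fintype ι] (f : ι → ℝ) (i : ι) : 0 < ∑ j, Real.exp (f j) :=
  sum_pos (fun _ _ => Real.exp_pos _) ⟨i, mem_univ i⟩

variable {A : ℕ}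

theorem softmax_nonneg (η : ℝ) (z : Fin A → ℝ) (a : Fin A) : 0 ≤ softmax η z a :=
  div_nonneg (Real.exp_pos _).le (sum_nonneg fun _ _ => (Real.exp_pos _).le)

theorem sum_softmax [Nonempty (Fin A)] (η : ℝ) (z : Fin A → ℝ) : ∑ a, softmax η z a = 1 := by
  simp only [softmax, ← sum_div]
  exact div_self (sum_exp_pos _ (Classical.arbitrary _)).ne'

theorem hasDerivAt_softmax_add_smul (η : ℝ) (z v : Fin A → ℝ) (a : Fin A) (t : ℝ) :
    HasDerivAt (fun s => softmax η (z + s • v) a)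
      (η * (softmax η (z + t • v) a * (v a - ∑ b, softmax η (z + t • v) b * v b))) t := by
  have hexp : ∀ b, HasDerivAt (fun s => Real.exp (η * (z + s • v) b))
      (Real.exp (η * (z + t • v) b) * (η * v b)) t := fun b => by
    simpa using ((((hasDerivAt_id t).mul_const (v b)).const_add (z b)).const_mul η).exp
  refine ((hexp a).fun_div (HasDerivAt.fun_sum fun b _ => hexp b)
    (sum_exp_pos _ a).ne').congr_deriv ?_
  have hS := (sum_exp_pos (fun b => η * (z + t • v) b) a).ne'
  simp only [softmax, div_mul_eq_mul_div, ← sum_div, mul_left_comm _ η, ← mul_sum]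
  field_simp

theorem abs_sum_mul_softmax_sub_le [Nonempty (Fin A)] {η : ℝ} (hη : 0 ≤ η) {ε : Fin A → ℝ}
    (hε : ∀ a, |ε a| ≤ 1) (z z' : Fin A → ℝ) :
    |∑ a, ε a * softmax η z a - ∑ a, ε a * softmax η z' a| ≤ η * ‖z - z'‖ := by
  set v := z - z'
  have hderiv (t : ℝ) := HasDerivAt.fun_sum fun a (_ : a ∈ univ) =>
    (hasDerivAt_softmax_add_smul η z' v a t).const_mul (ε a)
  have hbound (t : ℝ) : ‖∑ a, ε a * (η * (softmax η (z' + t • v) a *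
      (v a - ∑ b, softmax η (z' + t • v) b * v b)))‖ ≤ η * ‖v‖ := by
    set p := softmax η (z' + t • v)
    calc ‖∑ a, ε a * (η * (p a * (v a - ∑ b, p b * v b)))‖
        ≤ ∑ a, η * (p a * |v a - ∑ b, p b * v b|) := by
          refine (norm_sum_le _ _).trans (sum_le_sum fun a _ => ?_)
          rw [norm_mul, norm_mul, norm_mul, Real.norm_eq_abs, Real.norm_eq_abs, Real.norm_eq_abs,
            abs_of_nonneg hη, abs_of_nonneg (softmax_nonneg η _ a)]
          exact mul_le_of_le_one_left
            (mul_nonneg hη (mul_nonneg (softmax_nonneg η _ a) (abs_nonneg _))) (hε a)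
      _ = η * ∑ a, p a * |v a - ∑ b, p b * v b| := (mul_sum _ _ _).symm
      _ ≤ η * ‖v‖ := mul_le_mul_of_nonneg_left (sum_mul_abs_sub_sum_mul_le
          (softmax_nonneg η _) (sum_softmax η _) fun a => norm_le_pi_norm v a) hη
  have hmvt := norm_image_sub_le_of_norm_deriv_le_segment_01'
    (fun t _ => (hderiv t).hasDerivWithinAt) (fun t _ => hbound t)
  simpa [v] using hmvt

theorem softmax_l1_lipschitz_general {A : ℕ} {η : ℝ} (hη : 0 < η)
    (z z' : Fin A → ℝ) :
    ∑ a, |softmax η z a - softmax η z' a| ≤ η * ‖z - z'‖ := by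
  rcases isEmpty_or_nonempty (Fin A) with _ | _
  · simpa using mul_nonneg hη.le (norm_nonneg (z - z'))
  set ε : Fin A → ℝ := fun a => SignType.sign (softmax η z a - softmax η z' a)
  have hε (a : Fin A) : |ε a| ≤ 1 := by
    rcases lt_trichotomy (softmax η z a - softmax η z' a) 0 with h | h | h <;> simp [ε, h]
  calc ∑ a, |softmax η z a - softmax η z' a|
      = ∑ a, ε a * softmax η z a - ∑ a, ε a * softmax η z' a := by
        simp only [ε, ← sum_sub_distrib, ← mul_sub, sign_mul_self]
    _ ≤ η * ‖z - z'‖ := (le_abs_self _).trans (abs_sum_mul_softmax_sub_le hη.le hε z z')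

/-- The softmax map with parameter `η > 0` is `η`-Lipschitz from `ℓ∞` to `ℓ1`. -/
theorem softmax_l1_lipschitz {A : ℕ} (hA : 0 < A) {η : ℝ} (hη : 0 < η)
    (z z' : Fin A → ℝ) :
    ∑ a, |softmax η z a - softmax η z' a| ≤ η * ‖z - z'‖ :=
  softmax_l1_lipschitz_general hη z z'
end

section
/- Let $\Lambda = \lambda I + \sum_{j=1}^{n} \phi_j \phi_j^\top$ where $\lambda > 0$ and $\phi_1, \dots, \phi_n \in \mathbb{R}^d$. Then for any vector $\psi \in \mathbb{R}^d$, $\sum_{j=1}^{n} (\psi^\top \Lambda^{-1} \phi_j)^2 \leq \psi^\top \Lambda^{-1} \psi$. -/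
open BigOperators Matrix

/-! With `u = Λ⁻¹ ψ`, symmetry of `Λ⁻¹` turns each correlation `ψᵀ Λ⁻¹ φⱼ` into `uᵀ φⱼ`, while
`ψᵀ Λ⁻¹ ψ = uᵀ Λ u = λ ‖u‖² + ∑ⱼ (uᵀ φⱼ)²`; the two sides thus differ by `λ ‖u‖² ≥ 0`. -/

namespace Matrix

variable {m ι R : Type*} [Fintype m] [Fintype ι]

def regularizedGram [DecidableEq m] [CommRing R] (lam : R) (φ : ι → m → R) : Matrix m m R :=
  lam • 1 + ∑ j, vecMulVec (φ j) (φ j)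

theorem dotProduct_vecMulVec_self_mulVec [CommRing R] (x u : m → R) :
    u ⬝ᵥ (vecMulVec x x *ᵥ u) = (x ⬝ᵥ u) ^ 2 := by
  rw [vecMulVec_mulVec, op_smul_eq_smul, dotProduct_smul, dotProduct_comm, smul_eq_mul, sq]

theorem dotProduct_regularizedGram_mulVec [DecidableEq m] [CommRing R] (lam : R)
    (φ : ι → m → R) (u : m → R) :
    u ⬝ᵥ (regularizedGram lam φ *ᵥ u) = lam * (u ⬝ᵥ u) + ∑ j, (φ j ⬝ᵥ u) ^ 2 := by
  simp only [regularizedGram, add_mulVec, smul_mulVec, one_mulVec, sum_mulVec, dotProduct_add,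
    dotProduct_smul, dotProduct_sum, dotProduct_vecMulVec_self_mulVec, smul_eq_mul]

theorem posDef_regularizedGram [DecidableEq m] {lam : ℝ} (hlam : 0 < lam) (φ : ι → m → ℝ) :
    (regularizedGram lam φ).PosDef :=
  (PosDef.one.smul hlam).add_posSemidef <|
    posSemidef_sum _ fun j _ => by simpa using posSemidef_vecMulVec_self_star (φ j)

theorem IsSymm.dotProduct_mulVec_comm [CommRing R] {A : Matrix m m R} (hA : A.IsSymm)
    (v w : m → R) : v ⬝ᵥ (A *ᵥ w) = (A *ᵥ v) ⬝ᵥ w := by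
  rw [dotProduct_mulVec, ← mulVec_transpose, hA.eq]

theorem dotProduct_nonsing_inv_mulVec [DecidableEq m] [CommRing R] {A : Matrix m m R}
    (hA : IsUnit A.det) (v : m → R) : v ⬝ᵥ (A⁻¹ *ᵥ v) = (A⁻¹ *ᵥ v) ⬝ᵥ (A *ᵥ (A⁻¹ *ᵥ v)) := by
  rw [mulVec_mulVec, mul_nonsing_inv _ hA, one_mulVec, dotProduct_comm]

end Matrix

/-- For the regularized Gram matrix `Λ = λ I + ∑ φⱼ φⱼᵀ`, the sum of squared
correlations `(ψᵀ Λ⁻¹ φⱼ)²` is at most the quadratic form `ψᵀ Λ⁻¹ ψ`. -/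
theorem sum_sq_corr_le_quadform {d n : ℕ} (lam : ℝ) (hlam : 0 < lam)
    (φ : Fin n → Fin d → ℝ) (Λ : Matrix (Fin d) (Fin d) ℝ)
    (hΛ : Λ = lam • (1 : Matrix (Fin d) (Fin d) ℝ) + ∑ j, vecMulVec (φ j) (φ j))
    (ψ : Fin d → ℝ) :
    ∑ j, (ψ ⬝ᵥ (Λ⁻¹ *ᵥ φ j)) ^ 2 ≤ ψ ⬝ᵥ (Λ⁻¹ *ᵥ ψ) := by
  replace hΛ : Λ = regularizedGram lam φ := hΛ
  subst hΛ
  have hpd := posDef_regularizedGram hlam φ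
  have hsymm := isHermitian_iff_isSymm.mp hpd.inv.isHermitian
  rw [dotProduct_nonsing_inv_mulVec ((isUnit_iff_isUnit_det _).mp hpd.isUnit),
    dotProduct_regularizedGram_mulVec]
  simp_rw [hsymm.dotProduct_mulVec_comm ψ, dotProduct_comm (φ _)]
  exact le_add_of_nonneg_left <| mul_nonneg hlam.le <| by
    simpa using dotProduct_self_star_nonneg ((regularizedGram lam φ)⁻¹ *ᵥ ψ)
end

section
/- Let $\Lambda = \lambda I + \sum_{j=1}^{n} \phi_j \phi_j^\top$ with $\lambda > 0$ and $\phi_1, \dots, \phi_n \in \mathbb{R}^d$. Suppose $\psi \in \mathbb{R}^d$ satisfies $\psi^\top \Lambda^{-1} \psi \leq \tau$. If real numbers $\epsilon_1, \dots, \epsilon_n$ satisfy $|\epsilon_j| \leq \nu$ for all $j$, then $\left| \psi^\top \Lambda^{-1} \sum_{j=1}^n \phi_j \epsilon_j \right| \leq \nu \sqrt{n \tau}$. -/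
/-!
Put `v = Λ⁻¹ ψ`. Since `Λ⁻¹` is symmetric, the quantity to bound is `∑ⱼ εⱼ ⟪φⱼ, v⟫`, and
`∑ⱼ ⟪φⱼ, v⟫² ≤ vᵀ Λ v = ψᵀ Λ⁻¹ ψ ≤ τ` because `λ ≥ 0`. Then `|εⱼ| ≤ ν` and Cauchy–Schwarz give
`|∑ⱼ εⱼ ⟪φⱼ, v⟫| ≤ ν ∑ⱼ |⟪φⱼ, v⟫| ≤ ν √(n τ)`.
-/

open BigOperators Matrix

theorem sum_abs_le_sqrt_card_mul {ι : Type*} [Fintype ι] {a : ι → ℝ} {τ : ℝ}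
    (ha : ∑ j, a j ^ 2 ≤ τ) : ∑ j, |a j| ≤ √(Fintype.card ι * τ) := by
  rw [← abs_of_nonneg (Finset.sum_nonneg fun j _ => abs_nonneg (a j))]
  refine Real.abs_le_sqrt ?_
  calc (∑ j, |a j|) ^ 2 ≤ Fintype.card ι * ∑ j, |a j| ^ 2 :=
        sq_sum_le_card_mul_sum_sq (s := Finset.univ) (f := fun j => |a j|)
    _ ≤ Fintype.card ι * τ := by simp only [sq_abs]; gcongr

theorem abs_sum_mul_le_mul_sqrt {ι : Type*} [Fintype ι] {ε a : ι → ℝ} {ν τ : ℝ} (hν : 0 ≤ ν)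
    (hε : ∀ j, |ε j| ≤ ν) (ha : ∑ j, a j ^ 2 ≤ τ) :
    |∑ j, ε j * a j| ≤ ν * √(Fintype.card ι * τ) :=
  calc |∑ j, ε j * a j| ≤ ∑ j, |ε j| * |a j| := by
        simpa only [abs_mul] using Finset.abs_sum_le_sum_abs (fun j => ε j * a j) Finset.univ
    _ ≤ ∑ j, ν * |a j| := by gcongr with j; exact hε j
    _ = ν * ∑ j, |a j| := (Finset.mul_sum _ _ _).symm
    _ ≤ ν * √(Fintype.card ι * τ) := by gcongr; exact sum_abs_le_sqrt_card_mul ha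

theorem Matrix.IsSymm.dotProduct_mulVec_comm_s2 {m α : Type*} [Fintype m] [CommSemiring α]
    {A : Matrix m m α} (hA : A.IsSymm) (x y : m → α) : x ⬝ᵥ (A *ᵥ y) = (A *ᵥ x) ⬝ᵥ y := by
  rw [← hA.eq, dotProduct_transpose_mulVec, dotProduct_comm, hA.eq]

theorem Matrix.mulVec_nonsing_inv_mulVec {m R : Type*} [Fintype m] [DecidableEq m] [CommRing R]
    {A : Matrix m m R} (hA : IsUnit A) (x : m → R) : A *ᵥ (A⁻¹ *ᵥ x) = x := by
  rw [mulVec_mulVec, mul_nonsing_inv A (A.isUnit_iff_isUnit_det.mp hA), one_mulVec]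

section Gram

variable {ι m : Type*} [Fintype ι] [Fintype m] [DecidableEq m]

theorem posDef_smul_one_add_sum_vecMulVec {lam : ℝ} (hlam : 0 < lam) (φ : ι → m → ℝ) :
    (lam • (1 : Matrix m m ℝ) + ∑ j, vecMulVec (φ j) (φ j)).PosDef :=
  (PosDef.one.smul hlam).add_posSemidef <|
    posSemidef_sum _ fun j _ => by simpa using posSemidef_vecMulVec_self_star (φ j)

theorem dotProduct_smul_one_add_sum_vecMulVec_mulVec (lam : ℝ) (φ : ι → m → ℝ) (x : m → ℝ) :
    x ⬝ᵥ ((lam • (1 : Matrix m m ℝ) + ∑ j, vecMulVec (φ j) (φ j)) *ᵥ x) =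
      lam * (x ⬝ᵥ x) + ∑ j, (φ j ⬝ᵥ x) ^ 2 := by
  simp [add_mulVec, sum_mulVec, sum_dotProduct, vecMulVec_mulVec, smul_mulVec,
    dotProduct_comm x, sq]

theorem sum_sq_dotProduct_le_dotProduct_smul_one_add_sum_vecMulVec_mulVec {lam : ℝ}
    (hlam : 0 ≤ lam) (φ : ι → m → ℝ) (x : m → ℝ) :
    ∑ j, (φ j ⬝ᵥ x) ^ 2 ≤
      x ⬝ᵥ ((lam • (1 : Matrix m m ℝ) + ∑ j, vecMulVec (φ j) (φ j)) *ᵥ x) := by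
  have hx : 0 ≤ x ⬝ᵥ x := by simpa using dotProduct_self_star_nonneg x
  rw [dotProduct_smul_one_add_sum_vecMulVec_mulVec]
  exact le_add_of_nonneg_left (mul_nonneg hlam hx)

end Gram

theorem misspecification_bound_general {d n : ℕ} (lam τ ν : ℝ) (hlam : 0 < lam)
    (hν : 0 ≤ ν)
    (φ : Fin n → Fin d → ℝ) (Λ : Matrix (Fin d) (Fin d) ℝ)
    (hΛ : Λ = lam • (1 : Matrix (Fin d) (Fin d) ℝ) + ∑ j, vecMulVec (φ j) (φ j))
    (ψ : Fin d → ℝ) (hψ : ψ ⬝ᵥ (Λ⁻¹ *ᵥ ψ) ≤ τ)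
    (ε : Fin n → ℝ) (hε : ∀ j, |ε j| ≤ ν) :
    |ψ ⬝ᵥ (Λ⁻¹ *ᵥ (∑ j, ε j • φ j))| ≤ ν * Real.sqrt (n * τ) := by
  have hpos : Λ.PosDef := hΛ ▸ posDef_smul_one_add_sum_vecMulVec hlam φ
  set v := Λ⁻¹ *ᵥ ψ
  have hsq : ∑ j, (φ j ⬝ᵥ v) ^ 2 ≤ τ :=
    calc ∑ j, (φ j ⬝ᵥ v) ^ 2 ≤ v ⬝ᵥ (Λ *ᵥ v) :=
          hΛ ▸ sum_sq_dotProduct_le_dotProduct_smul_one_add_sum_vecMulVec_mulVec hlam.le φ v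
      _ = ψ ⬝ᵥ v := by rw [mulVec_nonsing_inv_mulVec hpos.isUnit, dotProduct_comm]
      _ ≤ τ := hψ
  have hsymm : (Λ⁻¹).IsSymm := isHermitian_iff_isSymm.mp hpos.inv.isHermitian
  have hsum : v ⬝ᵥ ∑ j, ε j • φ j = ∑ j, ε j * (φ j ⬝ᵥ v) := by
    rw [dotProduct_sum]
    simp only [dotProduct_comm v, smul_dotProduct, smul_eq_mul]
  rw [hsymm.dotProduct_mulVec_comm_s2, hsum]
  simpa only [Fintype.card_fin] using abs_sum_mul_le_mul_sqrt hν hε hsq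

/-- Misspecification error bound (the `J₂` term): if `ψᵀ Λ⁻¹ ψ ≤ τ` and `|εⱼ| ≤ ν`, then
`|ψᵀ Λ⁻¹ ∑ⱼ φⱼ εⱼ| ≤ ν √(n τ)`. -/
theorem misspecification_bound {d n : ℕ} (lam τ ν : ℝ) (hlam : 0 < lam)
    (hτ : 0 ≤ τ) (hν : 0 ≤ ν)
    (φ : Fin n → Fin d → ℝ) (Λ : Matrix (Fin d) (Fin d) ℝ)
    (hΛ : Λ = lam • (1 : Matrix (Fin d) (Fin d) ℝ) + ∑ j, vecMulVec (φ j) (φ j))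
    (ψ : Fin d → ℝ) (hψ : ψ ⬝ᵥ (Λ⁻¹ *ᵥ ψ) ≤ τ)
    (ε : Fin n → ℝ) (hε : ∀ j, |ε j| ≤ ν) :
    |ψ ⬝ᵥ (Λ⁻¹ *ᵥ (∑ j, ε j • φ j))| ≤ ν * Real.sqrt (n * τ) :=
  misspecification_bound_general lam τ ν hlam hν φ Λ hΛ ψ hψ ε hε
end

section
/- Fix $\tau, \lambda > 0$ and a feature map $\phi$ with values in the closed unit ball of $\mathbb{R}^d$. Suppose a finite sequence of vectors $\phi_1, \dots, \phi_n$ (from the range of $\phi$) satisfies: for each $j$, $\phi_j^\top \Lambda_{j-1}^{-1} \phi_j > \tau$ where $\Lambda_{j-1} = \lambda I + \sum_{l < j} \phi_l \phi_l^\top$. Then $n \leq \frac{e}{e-1}\cdot\frac{1+\tau}{\tau}\, d \big( \log(1 + 1/\tau) + \log(1 + 1/\lambda) \big)$. -/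
/-!
Each added vector multiplies the determinant of the regularized Gram matrix by
`1 + φⱼᵀ Λ_{j-1}⁻¹ φⱼ > 1 + τ` (matrix determinant lemma), so `det Λₙ ≥ λ^d (1 + τ)^n`.
On the other hand AM-GM on the eigenvalues bounds `det Λₙ` by `(tr Λₙ / d)^d ≤ (λ + n/d)^d`,
because every `φⱼ` lies in the unit ball. Hence `n log (1 + τ) ≤ d log (1 + n/(dλ))`, and the
estimates `τ/(1 + τ) ≤ log (1 + τ)` and `log y ≤ y/e` make this implicit bound on `n` explicit.
-/

open Matrix Finset

theorem Real.prod_le_sum_div_card_pow {ι : Type*} (s : Finset ι) {z : ι → ℝ}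
    (hz : ∀ i ∈ s, 0 ≤ z i) : ∏ i ∈ s, z i ≤ ((∑ i ∈ s, z i) / #s) ^ #s := by
  rcases s.eq_empty_or_nonempty with rfl | hs
  · simp
  have hcard : #s ≠ 0 := hs.card_ne_zero
  have hprod : 0 ≤ ∏ i ∈ s, z i := prod_nonneg hz
  have amgm := Real.geom_mean_le_arith_mean_weighted s (fun _ => (#s : ℝ)⁻¹) z
    (fun _ _ => by positivity) (by simp [hcard]) hz
  rw [Real.finsetProd_rpow s z hz, ← mul_sum, inv_mul_eq_div] at amgm
  calc ∏ i ∈ s, z i = ((∏ i ∈ s, z i) ^ ((#s : ℝ)⁻¹)) ^ #s :=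
        (Real.rpow_inv_natCast_pow hprod hcard).symm
    _ ≤ ((∑ i ∈ s, z i) / #s) ^ #s := pow_le_pow_left₀ (by positivity) amgm _

section Determinant

variable {m : Type*} [Fintype m]

theorem Matrix.PosSemidef.det_le_trace_div_card_pow [DecidableEq m] {A : Matrix m m ℝ}
    (hA : A.PosSemidef) : A.det ≤ (A.trace / Fintype.card m) ^ Fintype.card m := by
  have hdet := hA.isHermitian.det_eq_prod_eigenvalues
  have htr := hA.isHermitian.trace_eq_sum_eigenvalues
  simp only [RCLike.ofReal_real_eq_id, id] at hdet htr
  rw [hdet, htr]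
  exact Real.prod_le_sum_div_card_pow univ fun i _ => hA.eigenvalues_nonneg i

theorem Matrix.PosSemidef.det_le_pow_of_trace_le [DecidableEq m] {A : Matrix m m ℝ}
    (hA : A.PosSemidef) {c : ℝ} (h : A.trace ≤ Fintype.card m * c) :
    A.det ≤ c ^ Fintype.card m := by
  rcases (Fintype.card m).eq_zero_or_pos with hm | hm
  · have := Fintype.card_eq_zero_iff.mp hm
    simp
  calc A.det ≤ (A.trace / Fintype.card m) ^ Fintype.card m := hA.det_le_trace_div_card_pow
    _ ≤ c ^ Fintype.card m := by
      gcongr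
      · exact div_nonneg hA.trace_nonneg (Nat.cast_nonneg _)
      · rwa [div_le_iff₀' (by positivity)]

theorem Matrix.det_add_vecMulVec [DecidableEq m] {R : Type*} [CommRing R] {A : Matrix m m R}
    (hA : IsUnit A.det) (u v : m → R) :
    (A + vecMulVec u v).det = A.det * (1 + v ⬝ᵥ (A⁻¹ *ᵥ u)) := by
  rw [vecMulVec_eq Unit, det_add_replicateCol_mul_replicateRow hA, Matrix.mul_assoc,
    ← replicateCol_mulVec, det_unique (n := Unit)]
  rfl

theorem Matrix.PosDef.add_sum_vecMulVec_self {A : Matrix m m ℝ} (hA : A.PosDef)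
    {ι : Type*} (v : ι → m → ℝ) (s : Finset ι) :
    (A + ∑ l ∈ s, vecMulVec (v l) (v l)).PosDef :=
  hA.add_posSemidef <| posSemidef_sum s fun l _ => by
    simpa using posSemidef_vecMulVec_self_star (v l)

theorem Matrix.PosDef.det_mul_pow_le_det_add_sum_vecMulVec [DecidableEq m] {A : Matrix m m ℝ}
    (hA : A.PosDef) {ι : Type*} [LinearOrder ι] (v : ι → m → ℝ) {τ : ℝ} (hτ : 0 ≤ 1 + τ)
    (s : Finset ι)
    (hv : ∀ j ∈ s, τ ≤ v j ⬝ᵥ ((A + ∑ l ∈ s with l < j, vecMulVec (v l) (v l))⁻¹ *ᵥ v j)) :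
    A.det * (1 + τ) ^ #s ≤ (A + ∑ l ∈ s, vecMulVec (v l) (v l)).det := by
  induction s using Finset.induction_on_max with
  | empty => simp
  | insert a s hlt ih =>
    have ha : a ∉ s := fun h => (hlt a h).false
    have hfilter_a : {l ∈ insert a s | l < a} = s := by
      rw [filter_insert, if_neg (lt_irrefl a), filter_true_of_mem hlt]
    have hfilter : ∀ j ∈ s, {l ∈ insert a s | l < j} = {l ∈ s | l < j} := fun j hj => by
      rw [filter_insert, if_neg (hlt j hj).asymm]
    have hdet := ih fun j hj => hfilter j hj ▸ hv j (mem_insert_of_mem hj)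
    have hva := hv a (mem_insert_self a s)
    rw [hfilter_a] at hva
    set Λ := A + ∑ l ∈ s, vecMulVec (v l) (v l)
    have hΛ : Λ.PosDef := hA.add_sum_vecMulVec_self v s
    calc A.det * (1 + τ) ^ #(insert a s) = A.det * (1 + τ) ^ #s * (1 + τ) := by
          rw [card_insert_of_notMem ha, pow_succ, mul_assoc]
      _ ≤ Λ.det * (1 + v a ⬝ᵥ (Λ⁻¹ *ᵥ v a)) :=
          mul_le_mul hdet (by linarith) hτ hΛ.det_pos.le
      _ = (A + ∑ l ∈ insert a s, vecMulVec (v l) (v l)).det := by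
          rw [sum_insert ha, add_comm (vecMulVec _ _), ← add_assoc,
            det_add_vecMulVec hΛ.det_pos.ne'.isUnit]

end Determinant

theorem Real.log_le_div_exp_one {y : ℝ} (hy : 0 < y) : Real.log y ≤ y / Real.exp 1 := by
  have h := Real.log_le_sub_one_of_pos (div_pos hy (Real.exp_pos 1))
  rw [Real.log_div hy.ne' (Real.exp_pos 1).ne', Real.log_exp] at h
  linarith

theorem Real.log_one_add_div_le {x lam : ℝ} (hx : 0 ≤ x) (hlam : 0 < lam) :
    Real.log (1 + x / lam) ≤ Real.log (1 + 1 / lam) + Real.log (max 1 x) := by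
  have hmax : 1 + x / lam ≤ (1 + 1 / lam) * max 1 x := by
    have h1 : 1 ≤ max 1 x := le_max_left 1 x
    have hx' : x / lam ≤ max 1 x / lam := div_le_div_of_nonneg_right (le_max_right 1 x) hlam.le
    rw [add_mul, one_mul, one_div_mul_eq_div]
    linarith
  rw [← Real.log_mul (by positivity) (by positivity)]
  exact Real.log_le_log (by positivity) hmax

theorem le_of_mul_le_log_one_add_div {τ lam x : ℝ} (hτ : 0 < τ) (hlam : 0 < lam) (hx : 0 ≤ x)
    (h : τ / (1 + τ) * x ≤ Real.log (1 + x / lam)) :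
    x ≤ Real.exp 1 / (Real.exp 1 - 1) * ((1 + τ) / τ) *
      (Real.log (1 + 1 / τ) + Real.log (1 + 1 / lam)) := by
  set e := Real.exp 1
  set L := Real.log (1 + 1 / τ) + Real.log (1 + 1 / lam)
  set y := τ / (1 + τ) * x
  have he : 1 < e := Real.one_lt_exp_iff.mpr one_pos
  have hlogτ : 0 ≤ Real.log (1 + 1 / τ) := Real.log_nonneg (by simp; positivity)
  have hmax : Real.log (max 1 x) ≤ Real.log (1 + 1 / τ) + y / e := by
    rcases le_total x 1 with hx1 | hx1
    · rw [max_eq_left hx1, Real.log_one]; positivity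
    · have hx_eq : x = (1 + 1 / τ) * y := by simp only [y]; field_simp; ring
      rw [max_eq_right hx1, hx_eq, Real.log_mul (by positivity) (by positivity)]
      gcongr
      exact Real.log_le_div_exp_one (by positivity)
  have hyL : y - y / e ≤ L := by
    have := Real.log_one_add_div_le hx hlam
    simp only [L]; linarith
  have hyL' : y ≤ e / (e - 1) * L := by
    rw [div_mul_eq_mul_div, le_div_iff₀ (sub_pos.2 he)]
    have := mul_le_mul_of_nonneg_right hyL (by positivity : 0 ≤ e)
    rw [sub_mul, div_mul_cancel₀ y (by positivity)] at this
    linarith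
  calc x = (1 + τ) / τ * y := by simp only [y]; field_simp
    _ ≤ (1 + τ) / τ * (e / (e - 1) * L) := by gcongr
    _ = e / (e - 1) * ((1 + τ) / τ) * L := by ring

theorem natCast_le_of_pow_mul_pow_le {τ lam : ℝ} {N D : ℕ} (hτ : 0 < τ) (hlam : 0 < lam)
    (h : lam ^ D * (1 + τ) ^ N ≤ (lam + N / D) ^ D) :
    (N : ℝ) ≤ Real.exp 1 / (Real.exp 1 - 1) * ((1 + τ) / τ) * D *
      (Real.log (1 + 1 / τ) + Real.log (1 + 1 / lam)) := by
  rcases Nat.eq_zero_or_pos D with rfl | hD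
  · obtain rfl : N = 0 := by
      by_contra hN
      rw [pow_zero, pow_zero, one_mul] at h
      exact h.not_gt (one_lt_pow₀ (by linarith) hN)
    simp
  have hD' : (0 : ℝ) < D := Nat.cast_pos.mpr hD
  set x : ℝ := N / D
  have hpow : (1 + τ) ^ N ≤ (1 + x / lam) ^ D := by
    rw [show lam + x = lam * (1 + x / lam) by field_simp, mul_pow] at h
    exact le_of_mul_le_mul_left h (by positivity)
  have hlog : N * Real.log (1 + τ) ≤ D * Real.log (1 + x / lam) := by
    simpa only [Real.log_pow] using Real.log_le_log (by positivity) hpow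
  have hτlog : τ / (1 + τ) ≤ Real.log (1 + τ) := by
    have := Real.one_sub_inv_le_log_of_pos (by linarith : 0 < 1 + τ)
    rwa [show 1 - (1 + τ)⁻¹ = τ / (1 + τ) by field_simp; ring] at this
  have hx : τ / (1 + τ) * x ≤ Real.log (1 + x / lam) := by
    have hxD : N * Real.log (1 + τ) = D * (Real.log (1 + τ) * x) := by simp only [x]; field_simp
    calc τ / (1 + τ) * x ≤ Real.log (1 + τ) * x := by gcongr
      _ ≤ Real.log (1 + x / lam) := le_of_mul_le_mul_left (hxD ▸ hlog) hD'
  calc (N : ℝ) = D * x := by simp only [x]; field_simp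
    _ ≤ D * (Real.exp 1 / (Real.exp 1 - 1) * ((1 + τ) / τ) *
        (Real.log (1 + 1 / τ) + Real.log (1 + 1 / lam))) := by
          gcongr; exact le_of_mul_le_log_one_add_div hτ hlam (by positivity) hx
    _ = _ := by ring

theorem core_set_size_bound_general {d n : ℕ} (τ lam : ℝ) (hτ : 0 < τ)
    (hlam : 0 < lam)
    (φ : Fin n → Fin d → ℝ) (hφ : ∀ j, Real.sqrt (∑ i, (φ j i) ^ 2) ≤ 1)
    (Λ : Fin n → Matrix (Fin d) (Fin d) ℝ)
    (hΛ : ∀ j : Fin n, Λ j = lam • (1 : Matrix (Fin d) (Fin d) ℝ)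
      + ∑ l ∈ Finset.univ.filter (fun l => l < j), vecMulVec (φ l) (φ l))
    (hbig : ∀ j : Fin n, τ < φ j ⬝ᵥ ((Λ j)⁻¹ *ᵥ φ j)) :
    (n : ℝ) ≤ (Real.exp 1 / (Real.exp 1 - 1)) * ((1 + τ) / τ) * d *
      (Real.log (1 + 1 / τ) + Real.log (1 + 1 / lam)) := by
  have hA : (lam • (1 : Matrix (Fin d) (Fin d) ℝ)).PosDef := PosDef.one.smul hlam
  have hgrowth := hA.det_mul_pow_le_det_add_sum_vecMulVec φ (by linarith) univ
    fun j _ => (hΛ j ▸ hbig j).le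
  rw [card_univ, Fintype.card_fin, det_smul, det_one, mul_one, Fintype.card_fin] at hgrowth
  have htrace : (lam • (1 : Matrix (Fin d) (Fin d) ℝ) + ∑ l, vecMulVec (φ l) (φ l)).trace ≤
      d * (lam + n / d) := by
    have hnorm : ∀ l, φ l ⬝ᵥ φ l ≤ 1 := fun l => by simpa [dotProduct, sq] using hφ l
    simp only [trace_add, trace_smul, trace_one, trace_sum, trace_vecMulVec, Fintype.card_fin,
      smul_eq_mul]
    rcases Nat.eq_zero_or_pos d with rfl | hd
    · simp [dotProduct]
    rw [mul_add, mul_div_cancel₀ _ (by positivity), mul_comm]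
    simpa using sum_le_sum fun l (_ : l ∈ univ) => hnorm l
  have hdet := (hA.add_sum_vecMulVec_self φ univ).posSemidef.det_le_pow_of_trace_le
    (by rwa [Fintype.card_fin])
  rw [Fintype.card_fin] at hdet
  exact natCast_le_of_pow_mul_pow_le hτ hlam (hgrowth.trans hdet)

/-- Core-set size bound (elliptical potential): if each `φⱼ` (from the unit ball)
has uncertainty `φⱼᵀ Λ_{j-1}⁻¹ φⱼ > τ` w.r.t. the regularized Gram matrix of the
previously added vectors, then the number of such vectors is at most
`(e/(e-1)) ((1+τ)/τ) d (log(1+1/τ) + log(1+1/λ))`. -/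
theorem core_set_size_bound {d n : ℕ} (hd : 0 < d) (τ lam : ℝ) (hτ : 0 < τ)
    (hlam : 0 < lam)
    (φ : Fin n → Fin d → ℝ) (hφ : ∀ j, Real.sqrt (∑ i, (φ j i) ^ 2) ≤ 1)
    (Λ : Fin n → Matrix (Fin d) (Fin d) ℝ)
    (hΛ : ∀ j : Fin n, Λ j = lam • (1 : Matrix (Fin d) (Fin d) ℝ)
      + ∑ l ∈ Finset.univ.filter (fun l => l < j), vecMulVec (φ l) (φ l))
    (hbig : ∀ j : Fin n, τ < φ j ⬝ᵥ ((Λ j)⁻¹ *ᵥ φ j)) :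
    (n : ℝ) ≤ (Real.exp 1 / (Real.exp 1 - 1)) * ((1 + τ) / τ) * d *
      (Real.log (1 + 1 / τ) + Real.log (1 + 1 / lam)) :=
  core_set_size_bound_general τ lam hτ hlam φ hφ Λ hΛ hbig
end

section
/- Let $\Lambda = \lambda I + \sum_{j=1}^n \phi_j \phi_j^\top$ with $\lambda > 0$, $\phi_j \in \mathbb{R}^d$, and suppose $\psi \in \mathbb{R}^d$ satisfies $\psi^\top \Lambda^{-1}\psi \leq \tau$. Let $(\epsilon_{k,j})_{1\leq k\leq K, 1\leq j\leq n}$ be a martingale difference array adapted to a filtration $(\mathcal{G}_t)$ (ordered lexicographically in $(k,j)$) with $|\epsilon_{k,j}| \leq H$ almost surely. Then with probability at least $1-\delta$, $\left| \frac{1}{K} \sum_{k=1}^K \sum_{j=1}^n \psi^\top \Lambda^{-1}\phi_j\, \epsilon_{k,j} \right| \leq H\sqrt{\frac{2\tau \log(2/\delta)}{K}}$. -/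
open MeasureTheory BigOperators Matrix

open ProbabilityTheory

open scoped NNReal

/-!
The weights `w_t = ψᵀ Λ⁻¹ φ_{t mod n}` are deterministic, so `∑ w_t ε_t` is a martingale whose
increments are bounded by `H |w_t|`. Hoeffding's lemma, applied conditionally on `𝒢_t` and
combined with the tower property, makes the sum sub-Gaussian with variance proxy `H² ∑ w_t²`.
With `u = Λ⁻¹ ψ` one has `∑_j (φ_jᵀ u)² = uᵀ Λ u - λ |u|² ≤ ψᵀ Λ⁻¹ ψ ≤ τ`, so the proxy is at
most `H² K τ`, and the two-sided Chernoff bound at level `K H √(2 τ log(2/δ) / K)` is exactly `δ`.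
-/

namespace Matrix

theorem dotProduct_vecMulVec_self_mulVec_s16 {R n : Type*} [CommSemiring R] [Fintype n]
    (a x : n → R) : x ⬝ᵥ (vecMulVec a a *ᵥ x) = (a ⬝ᵥ x) ^ 2 := by
  rw [vecMulVec_mulVec, op_smul_eq_smul, dotProduct_smul, smul_eq_mul, dotProduct_comm, sq]

theorem IsHermitian.dotProduct_mulVec_comm {R n : Type*} [CommSemiring R] [StarRing R]
    [TrivialStar R] [Fintype n] {M : Matrix n n R} (hM : M.IsHermitian) (x y : n → R) :
    x ⬝ᵥ (M *ᵥ y) = y ⬝ᵥ (M *ᵥ x) := by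
  rw [dotProduct_mulVec, ← mulVec_transpose, dotProduct_comm,
    ← conjTranspose_eq_transpose_of_trivial, hM.eq]

theorem sum_sq_dotProduct_inv_mulVec_le {ι n : Type*} [Fintype n] [DecidableEq n]
    {A : Matrix n n ℝ} (hA : A.PosDef) (s : Finset ι) (φ : ι → n → ℝ) (ψ : n → ℝ) :
    ∑ j ∈ s, (ψ ⬝ᵥ ((A + ∑ i ∈ s, vecMulVec (φ i) (φ i))⁻¹ *ᵥ φ j)) ^ 2
      ≤ ψ ⬝ᵥ ((A + ∑ i ∈ s, vecMulVec (φ i) (φ i))⁻¹ *ᵥ ψ) := by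
  set M := A + ∑ i ∈ s, vecMulVec (φ i) (φ i)
  have hM : M.PosDef := hA.add_posSemidef <|
    posSemidef_sum s fun i _ ↦ by simpa using posSemidef_vecMulVec_self_star (φ i)
  set u := M⁻¹ *ᵥ ψ
  have hMu : M *ᵥ u = ψ := by
    rw [mulVec_mulVec, mul_nonsing_inv _ hM.det_pos.ne'.isUnit, one_mulVec]
  calc ∑ j ∈ s, (ψ ⬝ᵥ (M⁻¹ *ᵥ φ j)) ^ 2
      = u ⬝ᵥ ((∑ i ∈ s, vecMulVec (φ i) (φ i)) *ᵥ u) := by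
        simp only [sum_mulVec, dotProduct_sum, dotProduct_vecMulVec_self_mulVec_s16,
          hM.inv.isHermitian.dotProduct_mulVec_comm ψ, u]
    _ = u ⬝ᵥ ψ - u ⬝ᵥ (A *ᵥ u) := by
        rw [← hMu, add_mulVec, dotProduct_add, add_sub_cancel_left]
    _ ≤ ψ ⬝ᵥ u := by
        rw [dotProduct_comm u ψ]
        exact sub_le_self _ (by simpa using hA.posSemidef.dotProduct_mulVec_nonneg u)

end Matrix

theorem Finset.sum_range_mul_mod {M : Type*} [AddCommMonoid M] (f : ℕ → M) (k n : ℕ) :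
    ∑ t ∈ Finset.range (k * n), f (t % n) = k • ∑ j ∈ Finset.range n, f j := by
  induction k with
  | zero => simp
  | succ k ih =>
    rw [add_mul, one_mul, Finset.sum_range_add, ih, succ_nsmul]
    congr 1
    exact Finset.sum_congr rfl fun j hj ↦ by
      rw [Nat.mul_add_mod_of_lt (Finset.mem_range.mp hj)]

namespace Real

/-- The chord of `exp` over `[-s b, s b]`. For `b = 0` the junk value `sinh 0 / 0 = 0` is harmless,
since then `x = 0`. -/
theorem exp_mul_le_cosh_add_mul {s b x : ℝ} (hx : |x| ≤ b) :
    exp (s * x) ≤ cosh (s * b) + sinh (s * b) / b * x := by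
  obtain ⟨hxl, hxr⟩ := abs_le.mp hx
  rcases (abs_nonneg x).trans hx |>.eq_or_lt with rfl | hb
  · simp [show x = 0 by linarith]
  have hl : 0 ≤ (b - x) / (2 * b) := div_nonneg (by linarith) (by positivity)
  have hr : 0 ≤ (b + x) / (2 * b) := div_nonneg (by linarith) (by positivity)
  have hconv := convexOn_exp.2 (Set.mem_univ (-(s * b))) (Set.mem_univ (s * b)) hl hr
    (by field_simp; ring)
  calc exp (s * x) = exp (((b - x) / (2 * b)) • -(s * b) + ((b + x) / (2 * b)) • (s * b)) := by
        simp only [smul_eq_mul]; field_simp; ring_nf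
    _ ≤ _ := hconv
    _ = cosh (s * b) + sinh (s * b) / b * x := by
        rw [cosh_eq, sinh_eq]; simp only [smul_eq_mul]; field_simp; ring

end Real

theorem MeasureTheory.ofReal_one_sub_le_measure_of_compl_subset {Ω : Type*}
    {m0 : MeasurableSpace Ω} {μ : Measure Ω} [IsProbabilityMeasure μ] {s t : Set Ω} {δ : ℝ}
    (hst : sᶜ ⊆ t) (ht : μ.real t ≤ δ) : ENNReal.ofReal (1 - δ) ≤ μ s := by
  rw [ENNReal.ofReal_le_iff_le_toReal (measure_ne_top μ s), ← measureReal_def]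
  have hcover := measureReal_union_le (μ := μ) s sᶜ
  rw [Set.union_compl_self, probReal_univ] at hcover
  linarith [measureReal_mono (μ := μ) hst]

namespace ProbabilityTheory

open Real

variable {Ω : Type*} {m m0 : MeasurableSpace Ω} {μ : Measure Ω}

theorem condExp_exp_mul_le_of_abs_le [IsFiniteMeasure μ] (hm : m ≤ m0) {X : Ω → ℝ} {b : ℝ}
    (hX : AEStronglyMeasurable X μ) (hXb : ∀ᵐ ω ∂μ, |X ω| ≤ b) (hX0 : μ[X | m] =ᵐ[μ] 0)
    (t : ℝ) :
    μ[fun ω ↦ exp (t * X ω) | m] ≤ᵐ[μ] fun _ ↦ exp (b ^ 2 * t ^ 2 / 2) := by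
  have hXi : Integrable X μ := Integrable.of_bound hX b (by simpa using hXb)
  have hexp : Integrable (fun ω ↦ exp (t * X ω)) μ :=
    integrable_exp_mul_of_mem_Icc hX.aemeasurable (by simpa [abs_le] using hXb)
  set c := cosh (t * b)
  set A := sinh (t * b) / b
  have hchord : μ[(fun _ ↦ c) + A • X | m] =ᵐ[μ] fun _ ↦ c := by
    filter_upwards [condExp_add (integrable_const c) (hXi.smul A) m,
      condExp_smul A X m, hX0] with ω h_add h_smul h0
    simp [h_add, h_smul, h0, condExp_const hm]
  filter_upwards [condExp_mono hexp ((integrable_const c).add (hXi.smul A))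
    (hXb.mono fun ω h ↦ exp_mul_le_cosh_add_mul h), hchord] with ω h_mono h_chord
  calc _ ≤ _ := h_mono
    _ = c := h_chord
    _ ≤ exp ((t * b) ^ 2 / 2) := cosh_le_exp_half_sq _
    _ = exp (b ^ 2 * t ^ 2 / 2) := by ring_nf

theorem HasSubgaussianMGF.add_of_condExp_eq_zero [IsFiniteMeasure μ] (hm : m ≤ m0)
    {X Y : Ω → ℝ} {cX b : ℝ≥0} (hXm : StronglyMeasurable[m] X) (hX : HasSubgaussianMGF X cX μ)
    (hY : AEStronglyMeasurable Y μ) (hYb : ∀ᵐ ω ∂μ, |Y ω| ≤ b) (hY0 : μ[Y | m] =ᵐ[μ] 0) :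
    HasSubgaussianMGF (X + Y) (cX + b ^ 2) μ := by
  have hsplit : ∀ t, (fun ω ↦ exp (t * (X + Y) ω)) =
      (fun ω ↦ exp (t * X ω)) * fun ω ↦ exp (t * Y ω) := fun t ↦ by
    ext ω; simp [mul_add, exp_add]
  have hint : ∀ t, Integrable (fun ω ↦ exp (t * (X + Y) ω)) μ := fun t ↦ by
    rw [hsplit]
    refine (hX.integrable_exp_mul t).mul_bdd (c := exp (|t| * b))
      (continuous_exp.comp_aestronglyMeasurable (hY.const_mul t)) ?_
    filter_upwards [hYb] with ω h
    rw [norm_eq_abs, abs_exp]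
    exact exp_le_exp.2 ((le_abs_self _).trans (by rw [abs_mul]; gcongr))
  refine ⟨hint, fun t ↦ ?_⟩
  calc mgf (X + Y) μ t
      = ∫ ω, (μ[(fun ω ↦ exp (t * X ω)) * fun ω ↦ exp (t * Y ω) | m]) ω ∂μ := by
        rw [integral_condExp hm, ← hsplit]; rfl
    _ ≤ ∫ ω, exp (t * X ω) * exp (b ^ 2 * t ^ 2 / 2) ∂μ := by
        refine integral_mono_ae integrable_condExp ((hX.integrable_exp_mul t).mul_const _) ?_
        filter_upwards [condExp_mul_of_stronglyMeasurable_left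
          (continuous_exp.comp_stronglyMeasurable (hXm.const_mul t)) (hsplit t ▸ hint t)
          (integrable_exp_mul_of_mem_Icc hY.aemeasurable (by simpa [abs_le] using hYb)),
          condExp_exp_mul_le_of_abs_le hm hY hYb hY0 t] with ω h_pull h_le
        rw [h_pull]
        exact mul_le_mul_of_nonneg_left h_le (exp_nonneg _)
    _ = mgf X μ t * exp (b ^ 2 * t ^ 2 / 2) := integral_mul_const _ _
    _ ≤ exp (cX * t ^ 2 / 2) * exp (b ^ 2 * t ^ 2 / 2) := by
        gcongr; exact hX.mgf_le t
    _ = exp (↑(cX + b ^ 2) * t ^ 2 / 2) := by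
        rw [← exp_add]; push_cast; ring_nf

theorem HasSubgaussianMGF.sum_range_of_condExp_eq_zero [IsProbabilityMeasure μ]
    {𝒢 : Filtration ℕ m0} {Y : ℕ → Ω → ℝ} {b : ℕ → ℝ≥0}
    (hY : ∀ t, StronglyMeasurable[𝒢 (t + 1)] (Y t)) (hY0 : ∀ t, μ[Y t | 𝒢 t] =ᵐ[μ] 0)
    (hYb : ∀ t, ∀ᵐ ω ∂μ, |Y t ω| ≤ b t) (T : ℕ) :
    HasSubgaussianMGF (fun ω ↦ ∑ t ∈ Finset.range T, Y t ω)
      (∑ t ∈ Finset.range T, b t ^ 2) μ := by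
  induction T with
  | zero => simp
  | succ T ih =>
    have hsum : StronglyMeasurable[𝒢 T] fun ω ↦ ∑ t ∈ Finset.range T, Y t ω :=
      Finset.stronglyMeasurable_fun_sum _ fun t ht ↦
        (hY t).mono (𝒢.mono (Finset.mem_range.mp ht))
    simp_rw [Finset.sum_range_succ]
    exact ih.add_of_condExp_eq_zero (𝒢.le T) hsum
      ((hY T).mono (𝒢.le _)).aestronglyMeasurable (hYb T) (hY0 T)

theorem HasSubgaussianMGF.sum_range_mul_of_condExp_eq_zero [IsProbabilityMeasure μ]
    {𝒢 : Filtration ℕ m0} {ε : ℕ → Ω → ℝ} {H : ℝ}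
    (hε : ∀ t, StronglyMeasurable[𝒢 (t + 1)] (ε t)) (hε0 : ∀ t, μ[ε t | 𝒢 t] =ᵐ[μ] 0)
    (hεH : ∀ t, ∀ᵐ ω ∂μ, |ε t ω| ≤ H) (a : ℕ → ℝ) (T : ℕ) :
    HasSubgaussianMGF (fun ω ↦ ∑ t ∈ Finset.range T, a t * ε t ω)
      ⟨H ^ 2 * ∑ t ∈ Finset.range T, a t ^ 2, by positivity⟩ μ := by
  have hparam : ∑ t ∈ Finset.range T, (‖a t‖₊ * ‖H‖₊) ^ 2
      = ⟨H ^ 2 * ∑ t ∈ Finset.range T, a t ^ 2, by positivity⟩ := by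
    ext
    simp [mul_pow, Finset.mul_sum, mul_comm]
    rfl
  rw [← hparam]
  refine sum_range_of_condExp_eq_zero (fun t ↦ (hε t).const_mul (a t)) (fun t ↦ ?_)
    (fun t ↦ ?_) T
  · refine (condExp_smul (a t) (ε t) _).trans ?_
    filter_upwards [hε0 t] with ω h
    simp [h]
  · filter_upwards [hεH t] with ω h
    simpa [abs_mul] using mul_le_mul_of_nonneg_left (h.trans (le_abs_self H)) (abs_nonneg (a t))

theorem HasSubgaussianMGF.mono {X : Ω → ℝ} {c c' : ℝ≥0} (h : HasSubgaussianMGF X c μ)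
    (hc : c ≤ c') : HasSubgaussianMGF X c' μ :=
  ⟨h.integrable_exp_mul, fun t ↦ (h.mgf_le t).trans (by gcongr)⟩

theorem HasSubgaussianMGF.measureReal_abs_ge_le [IsFiniteMeasure μ] {X : Ω → ℝ} {c : ℝ≥0}
    (h : HasSubgaussianMGF X c μ) {ε : ℝ} (hε : 0 ≤ ε) :
    μ.real {ω | ε ≤ |X ω|} ≤ 2 * exp (-ε ^ 2 / (2 * c)) := by
  have hsplit : {ω | ε ≤ |X ω|} = {ω | ε ≤ X ω} ∪ {ω | ε ≤ (-X) ω} := by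
    ext ω; simp only [Set.mem_ofPred_eq, Set.mem_union, Pi.neg_apply, le_abs]
  calc μ.real {ω | ε ≤ |X ω|} ≤ μ.real {ω | ε ≤ X ω} + μ.real {ω | ε ≤ (-X) ω} :=
        hsplit ▸ measureReal_union_le _ _
    _ ≤ exp (-ε ^ 2 / (2 * c)) + exp (-ε ^ 2 / (2 * c)) :=
        add_le_add (h.measure_ge_le hε) (h.neg.measure_ge_le hε)
    _ = 2 * exp (-ε ^ 2 / (2 * c)) := by ring

theorem HasSubgaussianMGF.measureReal_abs_ge_le_of_log_le [IsFiniteMeasure μ] {X : Ω → ℝ}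
    {c : ℝ≥0} (h : HasSubgaussianMGF X c μ) (hc : 0 < c) {δ ε : ℝ} (hδ : 0 < δ) (hε : 0 ≤ ε)
    (hεδ : 2 * c * log (2 / δ) ≤ ε ^ 2) : μ.real {ω | ε ≤ |X ω|} ≤ δ := by
  refine (h.measureReal_abs_ge_le hε).trans ?_
  calc 2 * exp (-ε ^ 2 / (2 * c)) ≤ 2 * exp (-log (2 / δ)) := by
        gcongr
        rw [neg_div, neg_le_neg_iff, le_div_iff₀ (by positivity)]
        linarith
    _ = δ := by
        rw [exp_neg, exp_log (by positivity)]
        field_simp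

end ProbabilityTheory

theorem azuma_mds_bound_general {Ω : Type*} {m0 : MeasurableSpace Ω}
    {μ : Measure Ω} [IsProbabilityMeasure μ]
    {d : ℕ} (K n : ℕ) (hK : 1 ≤ K)
    (lam τ H : ℝ) (hlam : 0 < lam) (hτ : 0 < τ) (hH : 0 < H)
    (φ : ℕ → Fin d → ℝ) (Λ : Matrix (Fin d) (Fin d) ℝ)
    (hΛ : Λ = lam • (1 : Matrix (Fin d) (Fin d) ℝ)
      + ∑ j ∈ Finset.range n, vecMulVec (φ j) (φ j))
    (ψ : Fin d → ℝ) (hψ : ψ ⬝ᵥ (Λ⁻¹ *ᵥ ψ) ≤ τ)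
    (𝒢 : Filtration ℕ m0) (ε : ℕ → Ω → ℝ)
    (hadapted : ∀ t, StronglyMeasurable[𝒢 (t + 1)] (ε t))
    (hmds : ∀ t, ∀ᵐ ω ∂μ, (μ[ε t | 𝒢 t]) ω = 0)
    (hbdd : ∀ t, ∀ᵐ ω ∂μ, |ε t ω| ≤ H)
    (δ : ℝ) (hδ0 : 0 < δ) (hδ1 : δ < 1) :
    ENNReal.ofReal (1 - δ) ≤
      μ {ω | |(1 / (K : ℝ)) * ∑ t ∈ Finset.range (K * n),
          (ψ ⬝ᵥ (Λ⁻¹ *ᵥ φ (t % n))) * ε t ω|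
        ≤ H * Real.sqrt (2 * τ * Real.log (2 / δ) / K)} := by
  set a : ℕ → ℝ := fun t ↦ ψ ⬝ᵥ (Λ⁻¹ *ᵥ φ (t % n))
  set B := H * Real.sqrt (2 * τ * Real.log (2 / δ) / K)
  have hK0 : (0 : ℝ) < K := by exact_mod_cast hK
  have hlog : 0 < Real.log (2 / δ) := Real.log_pos (by rw [lt_div_iff₀ hδ0]; linarith)
  have hcoef : ∑ t ∈ Finset.range (K * n), a t ^ 2 ≤ K * τ := by
    rw [Finset.sum_range_mul_mod (fun j ↦ (ψ ⬝ᵥ (Λ⁻¹ *ᵥ φ j)) ^ 2), nsmul_eq_mul]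
    gcongr
    subst hΛ
    exact (sum_sq_dotProduct_inv_mulVec_le (PosDef.one.smul hlam) _ φ ψ).trans hψ
  have hc : (0 : ℝ) < H ^ 2 * (K * τ) := by positivity
  have hsub : HasSubgaussianMGF (fun ω ↦ ∑ t ∈ Finset.range (K * n), a t * ε t ω)
      ⟨H ^ 2 * (K * τ), hc.le⟩ μ :=
    (HasSubgaussianMGF.sum_range_mul_of_condExp_eq_zero hadapted hmds hbdd a _).mono
      (mul_le_mul_of_nonneg_left hcoef (sq_nonneg H))
  have hlevel : (K * B) ^ 2 = 2 * (H ^ 2 * (K * τ)) * Real.log (2 / δ) := by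
    rw [mul_pow, mul_pow, Real.sq_sqrt (by positivity)]
    field_simp
  refine ofReal_one_sub_le_measure_of_compl_subset (fun ω hω ↦ ?_)
    (hsub.measureReal_abs_ge_le_of_log_le (NNReal.coe_pos.mp hc) hδ0 (by positivity) hlevel.ge)
  simp only [Set.mem_compl_iff, Set.mem_ofPred_eq, not_le, abs_mul, one_div, abs_inv,
    Nat.abs_cast] at hω ⊢
  rw [lt_inv_mul_iff₀ hK0] at hω
  exact hω.le

/-- Azuma–Hoeffding bound for the martingale-difference array term `J₁`: if
`ψᵀ Λ⁻¹ ψ ≤ τ` and `(ε_t)` (the lexicographic flattening of `(ε_{k,j})`, with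
`t = k·n + j`) is a bounded martingale difference sequence, then with probability
at least `1 - δ`,
`|(1/K) ∑_{k,j} ψᵀ Λ⁻¹ φⱼ ε_{k,j}| ≤ H √(2 τ log(2/δ) / K)`. -/
theorem azuma_mds_bound {Ω : Type*} {m0 : MeasurableSpace Ω}
    {μ : Measure Ω} [IsProbabilityMeasure μ]
    {d : ℕ} (K n : ℕ) (hK : 1 ≤ K) (hn : 1 ≤ n)
    (lam τ H : ℝ) (hlam : 0 < lam) (hτ : 0 < τ) (hH : 0 < H)
    (φ : ℕ → Fin d → ℝ) (Λ : Matrix (Fin d) (Fin d) ℝ)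
    (hΛ : Λ = lam • (1 : Matrix (Fin d) (Fin d) ℝ)
      + ∑ j ∈ Finset.range n, vecMulVec (φ j) (φ j))
    (ψ : Fin d → ℝ) (hψ : ψ ⬝ᵥ (Λ⁻¹ *ᵥ ψ) ≤ τ)
    (𝒢 : Filtration ℕ m0) (ε : ℕ → Ω → ℝ)
    (hadapted : ∀ t, StronglyMeasurable[𝒢 (t + 1)] (ε t))
    (hmds : ∀ t, ∀ᵐ ω ∂μ, (μ[ε t | 𝒢 t]) ω = 0)
    (hbdd : ∀ t, ∀ᵐ ω ∂μ, |ε t ω| ≤ H)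
    (δ : ℝ) (hδ0 : 0 < δ) (hδ1 : δ < 1) :
    ENNReal.ofReal (1 - δ) ≤
      μ {ω | |(1 / (K : ℝ)) * ∑ t ∈ Finset.range (K * n),
          (ψ ⬝ᵥ (Λ⁻¹ *ᵥ φ (t % n))) * ε t ω|
        ≤ H * Real.sqrt (2 * τ * Real.log (2 / δ) / K)} :=
  azuma_mds_bound_general K n hK lam τ H hlam hτ hH φ Λ hΛ ψ hψ 𝒢 ε hadapted hmds hbdd δ hδ0 hδ1
end
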